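/- arXiv:2503.14569 — 3 statements merged into one kernel-verified Lean document; each statement's English description precedes it below -/
import Mathlib

section
/- Let p : ℝ^d → ℝ be a probability density, α > 0, σ > 0, and x ∈ ℝ^d with p_{α,σ}(x) > 0. Assume that y ↦ (1 + ‖y‖)·p(y)·φ_{α,σ}(x', y) is integrable for all x' in a neighborhood of x and that differentiation under the integral sign in x is justified by an integrable dominating function. Then ∇_x log p_{α,σ}(x) = ∫_{ℝ^d} ((α·y − x)/σ²) · p(y | x) dy; that is, the score of the noised marginal equals the posterior expectation of the conditional (denoising) score (α·y − x)/σ². -/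
/-!
Differentiating under the integral sign gives `∇ p_{α,σ}(x) = ∫ p(y) ∇ₓφ(x, y) dy`, and
`∇ₓφ(x, y) = φ(x, y) (α y - x) / σ²`; the chain rule for `log` divides this by `p_{α,σ}(x)`,
which turns `p(y) φ(x, y)` into the posterior density `p(y | x)`.
-/

open MeasureTheory Filter

/-- The (unnormalized) Gaussian transition kernel
`φ_{α,σ}(x, y) = exp(−‖x − α·y‖²/(2σ²))`. -/
noncomputable def gaussKernel (d : ℕ) (α σ : ℝ)
    (x y : EuclideanSpace ℝ (Fin d)) : ℝ :=
  Real.exp (-‖x - α • y‖ ^ 2 / (2 * σ ^ 2))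

open InnerProductSpace Metric

section Gradient

variable {E : Type*} [NormedAddCommGroup E] [InnerProductSpace ℝ E] [CompleteSpace E]
  {f : E → ℝ} {f' x : E}

theorem HasGradientAt.const_mul (hf : HasGradientAt f f' x) (c : ℝ) :
    HasGradientAt (fun x => c * f x) (c • f') x := by
  rw [hasGradientAt_iff_hasFDerivAt, map_smul] at *
  exact hf.const_mul c

theorem HasGradientAt.log (hf : HasGradientAt f f' x) (hx : f x ≠ 0) :
    HasGradientAt (fun x => Real.log (f x)) ((f x)⁻¹ • f') x := by
  rw [hasGradientAt_iff_hasFDerivAt, map_smul] at *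
  exact hf.log hx

theorem hasGradientAt_exp_neg_norm_sub_sq_div (σ : ℝ) (v x : E) :
    HasGradientAt (fun x => Real.exp (-‖x - v‖ ^ 2 / (2 * σ ^ 2)))
      (Real.exp (-‖x - v‖ ^ 2 / (2 * σ ^ 2)) • (σ ^ 2)⁻¹ • (v - x)) x := by
  have hsq : HasFDerivAt (fun x => -‖x - v‖ ^ 2 / (2 * σ ^ 2))
      (toDual ℝ E ((σ ^ 2)⁻¹ • (v - x))) x := by
    have h := (((hasFDerivAt_id x).sub_const v).norm_sq.mul_const (-(2 * σ ^ 2)⁻¹))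
    refine (h.congr_of_eventuallyEq (.of_forall fun x' => by simp only [id]; ring)).congr_fderiv ?_
    ext w
    simp only [map_sub, map_smul, toDual_apply_apply, ContinuousLinearMap.comp_id, neg_smul,
      neg_apply, smul_apply, sub_apply, coe_innerSL_apply, id_eq, nsmul_eq_mul, Nat.cast_ofNat,
      smul_eq_mul]
    ring
  rw [hasGradientAt_iff_hasFDerivAt, map_smul]
  exact hsq.exp

theorem hasGradientAt_integral_of_dominated_of_gradient_le {Ω : Type*} [MeasurableSpace Ω]
    {μ : Measure Ω} {F : E → Ω → ℝ} {G : E → Ω → E} {bound : Ω → ℝ} {x₀ : E} {ε : ℝ}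
    (ε_pos : 0 < ε) (hF_meas : ∀ᶠ x in nhds x₀, AEStronglyMeasurable (F x) μ)
    (hF_int : Integrable (F x₀) μ) (hG_meas : AEStronglyMeasurable (G x₀) μ)
    (h_bound : ∀ᵐ a ∂μ, ∀ x ∈ ball x₀ ε, ‖G x a‖ ≤ bound a) (bound_integrable : Integrable bound μ)
    (h_diff : ∀ᵐ a ∂μ, ∀ x ∈ ball x₀ ε, HasGradientAt (F · a) (G x a) x) :
    HasGradientAt (fun x => ∫ a, F x a ∂μ) (∫ a, G x₀ a ∂μ) x₀ := by
  have hG_int : Integrable (G x₀) μ :=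
    bound_integrable.mono' hG_meas (h_bound.mono fun a ha => ha x₀ (mem_ball_self ε_pos))
  have hcomm : ∫ a, toDual ℝ E (G x₀ a) ∂μ = toDual ℝ E (∫ a, G x₀ a ∂μ) :=
    ContinuousLinearMap.integral_comp_commSL (by simp)
      (toDual ℝ E).toContinuousLinearEquiv.toContinuousLinearMap hG_int
  rw [hasGradientAt_iff_hasFDerivAt, ← hcomm]
  refine hasFDerivAt_integral_of_dominated_of_fderiv_le (F' := fun x a => toDual ℝ E (G x a))
    (ball_mem_nhds x₀ ε_pos) hF_meas hF_int
    ((toDual ℝ E).continuous.comp_aestronglyMeasurable hG_meas) ?_ bound_integrable ?_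
  · simpa only [LinearIsometryEquiv.norm_map] using h_bound
  · simpa only [hasGradientAt_iff_hasFDerivAt] using h_diff

end Gradient

theorem MeasureTheory.Integrable.of_one_add_norm_mul {E : Type*} [NormedAddCommGroup E]
    [MeasurableSpace E] [OpensMeasurableSpace E] {μ : Measure E} {f : E → ℝ}
    (hf : Integrable (fun y => (1 + ‖y‖) * f y) μ) : Integrable f μ := by
  refine (hf.bdd_mul (f := fun y => (1 + ‖y‖)⁻¹) (c := 1) (by fun_prop)
    (.of_forall fun y => ?_)).congr (.of_forall fun y => ?_)
  · have : 0 < 1 + ‖y‖ := by positivity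
    rw [norm_inv, Real.norm_of_nonneg this.le]
    exact inv_le_one_of_one_le₀ (by simp)
  · have : 1 + ‖y‖ ≠ 0 := by positivity
    simp [this]

theorem score_eq_posterior_denoising_average_general (d : ℕ)
    (p : EuclideanSpace ℝ (Fin d) → ℝ)
    (α σ : ℝ)
    (x : EuclideanSpace ℝ (Fin d))
    (hpos : 0 < ∫ y, p y * gaussKernel d α σ x y)
    (hInt : ∀ᶠ x' in nhds x,
      Integrable (fun y => (1 + ‖y‖) * (p y * gaussKernel d α σ x' y)))
    (hDom : ∃ (ε : ℝ) (bound : EuclideanSpace ℝ (Fin d) → ℝ), 0 < ε ∧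
      Integrable bound ∧
      ∀ y, ∀ x' ∈ Metric.ball x ε,
        ‖gradient (fun x'' => p y * gaussKernel d α σ x'' y) x'‖ ≤ bound y) :
    gradient (fun x' => Real.log (∫ y, p y * gaussKernel d α σ x' y)) x
      = ∫ y,
          ((p y * gaussKernel d α σ x y) / ∫ z, p z * gaussKernel d α σ x z) •
            ((σ ^ 2)⁻¹ • (α • y - x)) := by
  obtain ⟨ε, bound, hε, hbound_int, hbound⟩ := hDom
  have hgrad (y x' : EuclideanSpace ℝ (Fin d)) :
      HasGradientAt (fun x'' => p y * gaussKernel d α σ x'' y)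
        ((p y * gaussKernel d α σ x' y) • (σ ^ 2)⁻¹ • (α • y - x')) x' := by
    rw [mul_smul]
    exact (hasGradientAt_exp_neg_norm_sub_sq_div σ (α • y) x').const_mul (p y)
  have hmeas : ∀ᶠ x' in nhds x, AEStronglyMeasurable (fun y => p y * gaussKernel d α σ x' y) :=
    hInt.mono fun x' h => h.of_one_add_norm_mul.aestronglyMeasurable
  have hmarginal := hasGradientAt_integral_of_dominated_of_gradient_le hε hmeas
    hInt.self_of_nhds.of_one_add_norm_mul
    (hmeas.self_of_nhds.smul (by fun_prop))
    (.of_forall fun y x' hx' => (hgrad y x').gradient ▸ hbound y x' hx') hbound_int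
    (.of_forall fun y x' _ => hgrad y x')
  rw [(hmarginal.log hpos.ne').gradient, ← integral_smul]
  simp only [div_eq_inv_mul, mul_smul]

/-- **Score of the noised marginal as a posterior denoising average.**
Let `p : ℝ^d → ℝ` be a probability density, `α > 0`, `σ > 0`, `x ∈ ℝ^d` with
`p_{α,σ}(x) > 0`.  Assume `y ↦ (1 + ‖y‖) p(y) φ_{α,σ}(x', y)` is integrable for all
`x'` near `x` and that differentiation under the integral sign in `x` is justified
by an integrable dominating function.  Then
`∇_x log p_{α,σ}(x) = ∫ ((α·y − x)/σ²) p(y | x) dy`. -/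
theorem score_eq_posterior_denoising_average (d : ℕ)
    (p : EuclideanSpace ℝ (Fin d) → ℝ)
    (hp0 : ∀ y, 0 ≤ p y) (hpI : Integrable p) (hpP : ∫ y, p y = 1)
    (α σ : ℝ) (hα : 0 < α) (hσ : 0 < σ)
    (x : EuclideanSpace ℝ (Fin d))
    (hpos : 0 < ∫ y, p y * gaussKernel d α σ x y)
    (hInt : ∀ᶠ x' in nhds x,
      Integrable (fun y => (1 + ‖y‖) * (p y * gaussKernel d α σ x' y)))
    (hDom : ∃ (ε : ℝ) (bound : EuclideanSpace ℝ (Fin d) → ℝ), 0 < ε ∧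
      Integrable bound ∧
      ∀ y, ∀ x' ∈ Metric.ball x ε,
        ‖gradient (fun x'' => p y * gaussKernel d α σ x'' y) x'‖ ≤ bound y) :
    gradient (fun x' => Real.log (∫ y, p y * gaussKernel d α σ x' y)) x
      = ∫ y,
          ((p y * gaussKernel d α σ x y) / ∫ z, p z * gaussKernel d α σ x z) •
            ((σ ^ 2)⁻¹ • (α • y - x)) :=
  score_eq_posterior_denoising_average_general d p α σ x hpos hInt hDom
end

section
/- Let p : ℝ^d → ℝ be a continuously differentiable probability density, α > 0, σ > 0, and x ∈ ℝ^d. Assume that y ↦ (1 + ‖y‖)·p(y)·φ_{α,σ}(x', y) and y ↦ ‖∇p(y)‖·φ_{α,σ}(x', y) are integrable for all x' in a neighborhood of x, that p(y)·φ_{α,σ}(x, y) → 0 as ‖y‖ → ∞, and that differentiation under the integral sign in x is justified by an integrable dominating function. Then ∫_{ℝ^d} (∇p)(y)·φ_{α,σ}(x, y) dy = (α/σ²) · ∫_{ℝ^d} (α·y − x)·p(y)·φ_{α,σ}(x, y) dy; that is, the posterior average of the exact score ∇ log p (scaled by 1/α) coincides with the posterior average of the denoising target (α·y − x)/σ². 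-/
open MeasureTheory Filter

/-! The kernel satisfies `∇_y φ(x, y) = (α/σ²) φ(x, y) (x − α y)`. Integrating by parts on `ℝ^d`,
which leaves no boundary term once `φ ∇p`, `p ∇φ` and `p φ` are integrable, turns
`∫ φ ∇p` into `−∫ p ∇_y φ = (α/σ²) ∫ p φ (α y − x)`. -/

open scoped RealInnerProductSpace Gradient

theorem ContDiff.continuous_gradient {E : Type*} [NormedAddCommGroup E] [InnerProductSpace ℝ E]
    [CompleteSpace E] {f : E → ℝ} (hf : ContDiff ℝ 1 f) : Continuous (∇ f) :=
  (InnerProductSpace.toDual ℝ E).symm.continuous.comp (hf.continuous_fderiv one_ne_zero)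

theorem MeasureTheory.Integrable.smul_of_norm_le_one_add_norm {E G : Type*} [NormedAddCommGroup E]
    [MeasurableSpace E] [OpensMeasurableSpace E] [NormedAddCommGroup G] [NormedSpace ℝ G]
    {μ : Measure E} {h : E → ℝ} {F : E → G} {C : ℝ}
    (hh : Integrable (fun y ↦ (1 + ‖y‖) * h y) μ) (hF : AEStronglyMeasurable F μ)
    (hF_le : ∀ y, ‖F y‖ ≤ C * (1 + ‖y‖)) :
    Integrable (fun y ↦ h y • F y) μ := by
  have hpos (y : E) : 0 < 1 + ‖y‖ := by positivity
  have hF' : AEStronglyMeasurable (fun y ↦ (1 + ‖y‖)⁻¹ • F y) μ :=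
    ((continuous_const.add continuous_norm).inv₀ fun y ↦ (hpos y).ne').aestronglyMeasurable.smul hF
  have hF'_le (y : E) : ‖(1 + ‖y‖)⁻¹ • F y‖ ≤ C := by
    rw [norm_smul, norm_inv, Real.norm_of_nonneg (hpos y).le, inv_mul_le_iff₀ (hpos y), mul_comm]
    exact hF_le y
  refine (hh.smul_bdd C hF' (ae_of_all _ hF'_le)).congr (ae_of_all _ fun y ↦ ?_)
  simp only [Pi.smul_apply', smul_smul]
  rw [mul_comm, inv_mul_cancel_left₀ (hpos y).ne']

theorem integral_smul_gradient_eq_neg_integral_smul_gradient {E : Type*} [NormedAddCommGroup E]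
    [InnerProductSpace ℝ E] [FiniteDimensional ℝ E] [MeasurableSpace E] [BorelSpace E]
    {μ : Measure E} [μ.IsAddHaarMeasure] {f g : E → ℝ}
    (hf : Differentiable ℝ f) (hg : Differentiable ℝ g)
    (hf'g : Integrable (fun y ↦ g y • ∇ f y) μ) (hfg' : Integrable (fun y ↦ f y • ∇ g y) μ)
    (hfg : Integrable (fun y ↦ f y * g y) μ) :
    ∫ y, g y • ∇ f y ∂μ = -∫ y, f y • ∇ g y ∂μ := by
  refine ext_inner_left ℝ fun v ↦ ?_
  have inner_smul_gradient (h k : E → ℝ) (y : E) : ⟪v, h y • ∇ k y⟫ = h y * fderiv ℝ k y v := by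
    rw [real_inner_smul_right, real_inner_comm, inner_gradient_left]
  rw [inner_neg_right, ← integral_inner hf'g, ← integral_inner hfg']
  simp only [inner_smul_gradient]
  have := integral_mul_fderiv_eq_neg_fderiv_mul_of_integrable (μ := μ) (v := v)
    (by simpa only [inner_smul_gradient, mul_comm] using hf'g.const_inner (𝕜 := ℝ) v)
    (by simpa only [inner_smul_gradient] using hfg'.const_inner (𝕜 := ℝ) v) hfg
    (fun y _ ↦ hf y) (fun y _ ↦ hg y)
  simp only [this, mul_comm, neg_neg]

theorem hasGradientAt_gaussKernel (d : ℕ) (α σ : ℝ) (x y : EuclideanSpace ℝ (Fin d)) :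
    HasGradientAt (gaussKernel d α σ x) ((α / σ ^ 2 * gaussKernel d α σ x y) • (x - α • y)) y := by
  have h := ((((hasFDerivAt_id y).const_smul α).const_sub x).norm_sq.const_mul
    (-1 / (2 * σ ^ 2))).exp
  have hexponent (z : EuclideanSpace ℝ (Fin d)) :
      -1 / (2 * σ ^ 2) * ‖x - α • z‖ ^ 2 = -‖x - α • z‖ ^ 2 / (2 * σ ^ 2) := by ring
  rw [hasGradientAt_iff_hasFDerivAt]
  refine (h.congr_of_eventuallyEq (.of_forall fun z ↦ ?_)).congr_fderiv ?_
  · simp [gaussKernel, hexponent]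
  · ext v
    simp [gaussKernel, hexponent]
    ring

theorem psm_target_eq_dsm_target_general (d : ℕ)
    (p : EuclideanSpace ℝ (Fin d) → ℝ) (hp : ContDiff ℝ 1 p)
    (α σ : ℝ)
    (x : EuclideanSpace ℝ (Fin d))
    (hInt1 : ∀ᶠ x' in nhds x,
      Integrable (fun y => (1 + ‖y‖) * (p y * gaussKernel d α σ x' y)))
    (hInt2 : ∀ᶠ x' in nhds x,
      Integrable (fun y => ‖gradient p y‖ * gaussKernel d α σ x' y)) :
    (∫ y, gaussKernel d α σ x y • gradient p y)
      = (α / σ ^ 2) • ∫ y, (p y * gaussKernel d α σ x y) • (α • y - x) := by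
  set φ := gaussKernel d α σ x
  have hφ (y) : HasGradientAt φ ((α / σ ^ 2 * φ y) • (x - α • y)) y :=
    hasGradientAt_gaussKernel d α σ x y
  have hφ_diff : Differentiable ℝ φ := fun y ↦ (hφ y).differentiableAt
  have hφ_nonneg (y) : 0 ≤ φ y := (Real.exp_pos _).le
  have hpφ : Integrable (fun y ↦ (1 + ‖y‖) * (p y * φ y)) := hInt1.self_of_nhds
  have hp_grad_φ (y) : p y • ∇ φ y = -(α / σ ^ 2) • ((p y * φ y) • (α • y - x)) := by
    rw [(hφ y).gradient]
    module
  have hdrift : Integrable fun y ↦ (p y * φ y) • (α • y - x) := by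
    refine hpφ.smul_of_norm_le_one_add_norm (C := |α| + ‖x‖)
      (by fun_prop : Continuous fun y ↦ α • y - x).aestronglyMeasurable fun y ↦ ?_
    grw [norm_sub_le, norm_smul, Real.norm_eq_abs]
    nlinarith [abs_nonneg α, norm_nonneg x, norm_nonneg y]
  have hφ_grad_p : Integrable fun y ↦ φ y • ∇ p y := by
    refine hInt2.self_of_nhds.mono'
      (hφ_diff.continuous.smul hp.continuous_gradient).aestronglyMeasurable (ae_of_all _ fun y ↦ ?_)
    rw [norm_smul, Real.norm_of_nonneg (hφ_nonneg y), mul_comm]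
  calc ∫ y, φ y • ∇ p y
      = -∫ y, p y • ∇ φ y := by
        refine integral_smul_gradient_eq_neg_integral_smul_gradient
          (hp.differentiable one_ne_zero) hφ_diff hφ_grad_p ?_ ?_
        · simp_rw [hp_grad_φ]
          exact hdrift.smul (-(α / σ ^ 2))
        · simpa using hpφ.smul_of_norm_le_one_add_norm (F := fun _ ↦ (1 : ℝ)) (C := 1)
            aestronglyMeasurable_const fun y ↦ by simp
    _ = (α / σ ^ 2) • ∫ y, (p y * φ y) • (α • y - x) := by
        simp only [hp_grad_φ, neg_smul, integral_neg, integral_smul, neg_neg]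

/-- **Equivalence of PSM and DSM regression targets as unnormalized posterior averages.**
Let `p : ℝ^d → ℝ` be a `C¹` probability density, `α > 0`, `σ > 0`, `x ∈ ℝ^d`.
Assume `y ↦ (1 + ‖y‖) p(y) φ_{α,σ}(x', y)` and `y ↦ ‖∇p(y)‖ φ_{α,σ}(x', y)` are
integrable for all `x'` near `x`, that `p(y) φ_{α,σ}(x, y) → 0` as `‖y‖ → ∞`, and
that differentiation under the integral sign in `x` is justified by an integrable
dominating function.  Then
`∫ (∇p)(y) φ_{α,σ}(x, y) dy = (α/σ²) ∫ (α·y − x) p(y) φ_{α,σ}(x, y) dy`. -/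
theorem psm_target_eq_dsm_target (d : ℕ)
    (p : EuclideanSpace ℝ (Fin d) → ℝ) (hp : ContDiff ℝ 1 p)
    (hp0 : ∀ y, 0 ≤ p y) (hpI : Integrable p) (hpP : ∫ y, p y = 1)
    (α σ : ℝ) (hα : 0 < α) (hσ : 0 < σ)
    (x : EuclideanSpace ℝ (Fin d))
    (hInt1 : ∀ᶠ x' in nhds x,
      Integrable (fun y => (1 + ‖y‖) * (p y * gaussKernel d α σ x' y)))
    (hInt2 : ∀ᶠ x' in nhds x,
      Integrable (fun y => ‖gradient p y‖ * gaussKernel d α σ x' y))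
    (hTail : Tendsto (fun y => p y * gaussKernel d α σ x y) (cocompact _) (nhds 0))
    (hDom : ∃ (ε : ℝ) (bound : EuclideanSpace ℝ (Fin d) → ℝ), 0 < ε ∧
      Integrable bound ∧
      ∀ y, ∀ x' ∈ Metric.ball x ε,
        ‖gradient (fun x'' => p y * gaussKernel d α σ x'' y) x'‖ ≤ bound y) :
    (∫ y, gaussKernel d α σ x y • gradient p y)
      = (α / σ ^ 2) • ∫ y, (p y * gaussKernel d α σ x y) • (α • y - x) :=
  psm_target_eq_dsm_target_general d p hp α σ x hInt1 hInt2
end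

section
/- Fix μ, y ∈ ℝ and v > 0, and let α, σ : (0, 1] → ℝ be noise schedules with α_t > 0 for all t, α_t → 1 and σ_t → 0 as t → 0⁺. For each t, let π_{y,t} denote the probability measure on ℝ with density proportional to x ↦ exp(−(x − μ)²/(2v)) · exp(−(y − α_t·x)²/(2σ_t²)). Then as t → 0⁺: (i) the variance under π_{y,t} of the DSM target x ↦ (α_t·x − y)/σ_t², which equals α_t²·v/(σ_t²·(α_t²·v + σ_t²)), tends to +∞; (ii) the variance under π_{y,t} of the PSM target x ↦ −(x − μ)/v, which equals σ_t²/(v·(α_t²·v + σ_t²)), tends to 0; and (iii) there exists t₀ > 0 such that for all t ∈ (0, t₀) the PSM target variance is strictly smaller than the DSM target variance. -/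
/-! Completing the square, `π_{y,t}` is the Gaussian with variance
`V_t = v σ_t² / (α_t² v + σ_t²)`. Both targets are affine in `x`, so each has variance `A² V_t`
for its slope `A`: `α_t / σ_t²` for DSM and `-1 / v` for PSM. Since `V_t ~ σ_t²` as `t → 0⁺`, the
DSM variance grows like `σ_t⁻²` while the PSM variance vanishes like `σ_t²`. -/

open MeasureTheory Filter Real Set ProbabilityTheory
open scoped NNReal Topology

noncomputable def weightedVar (w g : ℝ → ℝ) : ℝ :=
  (∫ x, (g x - (∫ x', g x' * w x') / (∫ x'', w x'')) ^ 2 * w x) / (∫ x'', w x'')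

lemma integral_mul_const_mul_gaussianPDFReal (h : ℝ → ℝ) (c m : ℝ) {V : ℝ≥0} (hV : V ≠ 0) :
    ∫ x, h x * (c * gaussianPDFReal m V x) = c * ∫ x, h x ∂gaussianReal m V := by
  rw [integral_gaussianReal_eq_integral_smul hV, ← integral_const_mul]
  congr 1 with x
  rw [smul_eq_mul]
  ring

lemma weightedVar_const_mul_gaussianPDFReal {c : ℝ} (hc : c ≠ 0) (m : ℝ) {V : ℝ≥0} (hV : V ≠ 0)
    {g : ℝ → ℝ} (hg : AEMeasurable g (gaussianReal m V)) :
    weightedVar (fun x => c * gaussianPDFReal m V x) g = Var[g; gaussianReal m V] := by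
  have hmass : ∫ x, c * gaussianPDFReal m V x = c := by
    simpa using integral_mul_const_mul_gaussianPDFReal (fun _ => 1) c m hV
  simp only [weightedVar, integral_mul_const_mul_gaussianPDFReal _ c m hV, hmass,
    mul_div_cancel_left₀ _ hc, variance_eq_integral hg]

lemma variance_affine_gaussianReal (A B m : ℝ) (V : ℝ≥0) :
    Var[fun x => A * x + B; gaussianReal m V] = A ^ 2 * V := by
  rw [variance_add_const (by fun_prop), variance_const_mul, variance_fun_id_gaussianReal]

lemma weightedVar_const_mul_exp_affine {c V : ℝ} (hc : c ≠ 0) (hV : 0 < V) (m A B : ℝ) :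
    weightedVar (fun x => c * exp (-(x - m) ^ 2 / (2 * V))) (fun x => A * x + B) = A ^ 2 * V := by
  have hpdf : (fun x => c * exp (-(x - m) ^ 2 / (2 * V))) =
      fun x => c * √(2 * π * V) * gaussianPDFReal m V.toNNReal x := by
    ext x
    have hroot : 0 < √(2 * π * V) := by positivity
    rw [gaussianPDFReal, Real.coe_toNNReal _ hV.le]
    field_simp
  rw [hpdf, weightedVar_const_mul_gaussianPDFReal (by positivity) m (by simpa using hV)
    (by fun_prop), variance_affine_gaussianReal, Real.coe_toNNReal _ hV.le]

/-- Bayes' rule for a Gaussian prior `N(μ, v)` and likelihood `y ∣ x ∼ N(a x, s²)`: the posterior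
is `N((μ s² + a y v) / (a² v + s²), v s² / (a² v + s²))`, up to the evidence factor. -/
lemma exp_prior_mul_exp_likelihood (μ v y a s : ℝ) (hv : 0 < v) (hs : s ≠ 0) (x : ℝ) :
    exp (-(x - μ) ^ 2 / (2 * v)) * exp (-(y - a * x) ^ 2 / (2 * s ^ 2)) =
      exp (-(y - a * μ) ^ 2 / (2 * (a ^ 2 * v + s ^ 2))) *
        exp (-(x - (μ * s ^ 2 + a * y * v) / (a ^ 2 * v + s ^ 2)) ^ 2 /
          (2 * (v * s ^ 2 / (a ^ 2 * v + s ^ 2)))) := by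
  have hD : 0 < a ^ 2 * v + s ^ 2 := by positivity
  rw [← exp_add, ← exp_add]
  congr 1
  field_simp
  ring

section Posterior

variable (μ y : ℝ) {v a s : ℝ}

lemma weightedVar_posterior_affine (hv : 0 < v) (hs : s ≠ 0) (A B : ℝ) :
    weightedVar (fun x => exp (-(x - μ) ^ 2 / (2 * v)) * exp (-(y - a * x) ^ 2 / (2 * s ^ 2)))
      (fun x => A * x + B) = A ^ 2 * (v * s ^ 2 / (a ^ 2 * v + s ^ 2)) := by
  simp_rw [exp_prior_mul_exp_likelihood μ v y a s hv hs]
  exact weightedVar_const_mul_exp_affine (exp_pos _).ne' (by positivity) _ A B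

lemma weightedVar_posterior_dsmTarget (hv : 0 < v) (hs : s ≠ 0) :
    weightedVar (fun x => exp (-(x - μ) ^ 2 / (2 * v)) * exp (-(y - a * x) ^ 2 / (2 * s ^ 2)))
      (fun x => (a * x - y) / s ^ 2) = a ^ 2 * v / (s ^ 2 * (a ^ 2 * v + s ^ 2)) := by
  rw [show (fun x => (a * x - y) / s ^ 2) = fun x => a / s ^ 2 * x + -y / s ^ 2 from
    funext fun x => by ring, weightedVar_posterior_affine μ y hv hs]
  have hD : 0 < a ^ 2 * v + s ^ 2 := by positivity
  field_simp

lemma weightedVar_posterior_psmTarget (hv : 0 < v) (hs : s ≠ 0) :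
    weightedVar (fun x => exp (-(x - μ) ^ 2 / (2 * v)) * exp (-(y - a * x) ^ 2 / (2 * s ^ 2)))
      (fun x => -(x - μ) / v) = s ^ 2 / (v * (a ^ 2 * v + s ^ 2)) := by
  rw [show (fun x => -(x - μ) / v) = fun x => -1 / v * x + μ / v from
    funext fun x => by ring, weightedVar_posterior_affine μ y hv hs]
  have hD : 0 < a ^ 2 * v + s ^ 2 := by positivity
  field_simp

end Posterior

section Asymptotics

variable {ι : Type*} {l : Filter ι} {α σ : ι → ℝ} {a v : ℝ}

lemma tendsto_dsmVar_atTop (hv : 0 < v) (ha : a ≠ 0) (hα : Tendsto α l (𝓝 a))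
    (hσ : Tendsto σ l (𝓝 0)) (hσne : ∀ᶠ t in l, σ t ≠ 0) :
    Tendsto (fun t => α t ^ 2 * v / (σ t ^ 2 * (α t ^ 2 * v + σ t ^ 2))) l atTop := by
  have hsignal : Tendsto (fun t => α t ^ 2 * v / (α t ^ 2 * v + σ t ^ 2)) l (𝓝 1) := by
    have hav : a ^ 2 * v ≠ 0 := by positivity
    have h := ((hα.pow 2).mul_const v).div (((hα.pow 2).mul_const v).add (hσ.pow 2))
      (by simpa using hav)
    rwa [zero_pow two_ne_zero, add_zero, div_self hav] at h
  have hnoise : Tendsto (fun t => σ t ^ 2) l (𝓝[>] 0) :=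
    tendsto_nhdsWithin_iff.mpr
      ⟨by simpa using hσ.pow 2, hσne.mono fun t ht => mem_Ioi.mpr (by positivity)⟩
  refine (hsignal.pos_mul_atTop one_pos (tendsto_inv_nhdsGT_zero.comp hnoise)).congr fun t => ?_
  rw [Function.comp_apply, div_mul_eq_div_div_swap, div_eq_mul_inv _ (σ t ^ 2)]

lemma tendsto_psmVar_zero (hv : 0 < v) (ha : a ≠ 0) (hα : Tendsto α l (𝓝 a))
    (hσ : Tendsto σ l (𝓝 0)) :
    Tendsto (fun t => σ t ^ 2 / (v * (α t ^ 2 * v + σ t ^ 2))) l (𝓝 0) := by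
  have hden : v * (a ^ 2 * v + 0 ^ 2) ≠ 0 := by simp [ha, hv.ne']
  have h := (hσ.pow 2).div (tendsto_const_nhds.mul (((hα.pow 2).mul_const v).add (hσ.pow 2))) hden
  rwa [zero_pow two_ne_zero, zero_div] at h

end Asymptotics

lemma exists_forall_Ioo_lt_of_tendsto {f g : ℝ → ℝ} {a c : ℝ} (hf : Tendsto f (𝓝[>] a) (𝓝 c))
    (hg : Tendsto g (𝓝[>] a) atTop) : ∃ b > a, ∀ t ∈ Ioo a b, f t < g t := by
  have hlt : ∀ᶠ t in 𝓝[>] a, f t < g t :=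
    ((hf.eventually_lt_const (lt_add_one c)).and (hg.eventually_gt_atTop (c + 1))).mono
      fun t ht => ht.1.trans ht.2
  obtain ⟨b, hb, hsub⟩ := mem_nhdsGT_iff_exists_Ioo_subset.mp hlt
  exact ⟨b, hb, fun t ht => hsub ht⟩

theorem psm_dsm_variance_near_zero_general (μ y v : ℝ) (hv : 0 < v)
    (αf σf : ℝ → ℝ)
    (hσpos : ∀ t ∈ Set.Ioc (0 : ℝ) 1, 0 < σf t)
    (hα1 : Tendsto αf (nhdsWithin 0 (Set.Ioi 0)) (nhds 1))
    (hσ0 : Tendsto σf (nhdsWithin 0 (Set.Ioi 0)) (nhds 0)) :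
    let f : ℝ → ℝ → ℝ := fun t x =>
      Real.exp (-(x - μ) ^ 2 / (2 * v)) *
        Real.exp (-(y - αf t * x) ^ 2 / (2 * (σf t) ^ 2))
    let varOf : ℝ → (ℝ → ℝ) → ℝ := fun t g =>
      (∫ x, (g x - (∫ x', g x' * f t x') / (∫ x'', f t x'')) ^ 2 * f t x) /
        (∫ x'', f t x'')
    let dsmVar : ℝ → ℝ := fun t => varOf t (fun x => (αf t * x - y) / (σf t) ^ 2)
    let psmVar : ℝ → ℝ := fun t => varOf t (fun x => -(x - μ) / v)
    (∀ t ∈ Set.Ioc (0 : ℝ) 1,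
        dsmVar t = (αf t) ^ 2 * v / ((σf t) ^ 2 * ((αf t) ^ 2 * v + (σf t) ^ 2)) ∧
        psmVar t = (σf t) ^ 2 / (v * ((αf t) ^ 2 * v + (σf t) ^ 2))) ∧
    Tendsto dsmVar (nhdsWithin 0 (Set.Ioi 0)) atTop ∧
    Tendsto psmVar (nhdsWithin 0 (Set.Ioi 0)) (nhds 0) ∧
    ∃ t₀ > (0 : ℝ), ∀ t ∈ Set.Ioo (0 : ℝ) t₀, psmVar t < dsmVar t := by
  intro f varOf dsmVar psmVar
  have hformulas : ∀ t ∈ Ioc (0 : ℝ) 1,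
      dsmVar t = (αf t) ^ 2 * v / ((σf t) ^ 2 * ((αf t) ^ 2 * v + (σf t) ^ 2)) ∧
      psmVar t = (σf t) ^ 2 / (v * ((αf t) ^ 2 * v + (σf t) ^ 2)) := fun t ht =>
    ⟨weightedVar_posterior_dsmTarget μ y hv (hσpos t ht).ne',
      weightedVar_posterior_psmTarget μ y hv (hσpos t ht).ne'⟩
  have hnear : ∀ᶠ t in 𝓝[>] (0 : ℝ), t ∈ Ioc (0 : ℝ) 1 := Ioc_mem_nhdsGT one_pos
  have hdsm : Tendsto dsmVar (𝓝[>] 0) atTop :=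
    (tendsto_dsmVar_atTop hv one_ne_zero hα1 hσ0
      (hnear.mono fun t ht => (hσpos t ht).ne')).congr'
      (hnear.mono fun t ht => (hformulas t ht).1.symm)
  have hpsm : Tendsto psmVar (𝓝[>] 0) (𝓝 0) :=
    (tendsto_psmVar_zero hv one_ne_zero hα1 hσ0).congr'
      (hnear.mono fun t ht => (hformulas t ht).2.symm)
  exact ⟨hformulas, hdsm, hpsm, exists_forall_Ioo_lt_of_tendsto hpsm hdsm⟩

/-- **PSM has lower posterior-target variance than DSM near `t = 0`.**
Fix `μ, y ∈ ℝ`, `v > 0`, and noise schedules `α, σ` with `α_t > 0`, `σ_t > 0` for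
`t ∈ (0, 1]`, `α_t → 1` and `σ_t → 0` as `t → 0⁺`.  Let `π_{y,t}` have density
proportional to `x ↦ exp(−(x − μ)²/(2v)) · exp(−(y − α_t x)²/(2σ_t²))`.  Then as
`t → 0⁺`: (i) the variance under `π_{y,t}` of the DSM target `x ↦ (α_t x − y)/σ_t²`,
which equals `α_t² v/(σ_t²(α_t² v + σ_t²))`, tends to `+∞`; (ii) the variance under
`π_{y,t}` of the PSM target `x ↦ −(x − μ)/v`, which equals `σ_t²/(v(α_t² v + σ_t²))`,
tends to `0`; (iii) there exists `t₀ > 0` such that for all `t ∈ (0, t₀)` the PSM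
target variance is strictly smaller than the DSM target variance. -/
theorem psm_dsm_variance_near_zero (μ y v : ℝ) (hv : 0 < v)
    (αf σf : ℝ → ℝ)
    (hαpos : ∀ t ∈ Set.Ioc (0 : ℝ) 1, 0 < αf t)
    (hσpos : ∀ t ∈ Set.Ioc (0 : ℝ) 1, 0 < σf t)
    (hα1 : Tendsto αf (nhdsWithin 0 (Set.Ioi 0)) (nhds 1))
    (hσ0 : Tendsto σf (nhdsWithin 0 (Set.Ioi 0)) (nhds 0)) :
    let f : ℝ → ℝ → ℝ := fun t x =>
      Real.exp (-(x - μ) ^ 2 / (2 * v)) *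
        Real.exp (-(y - αf t * x) ^ 2 / (2 * (σf t) ^ 2))
    let varOf : ℝ → (ℝ → ℝ) → ℝ := fun t g =>
      (∫ x, (g x - (∫ x', g x' * f t x') / (∫ x'', f t x'')) ^ 2 * f t x) /
        (∫ x'', f t x'')
    let dsmVar : ℝ → ℝ := fun t => varOf t (fun x => (αf t * x - y) / (σf t) ^ 2)
    let psmVar : ℝ → ℝ := fun t => varOf t (fun x => -(x - μ) / v)
    (∀ t ∈ Set.Ioc (0 : ℝ) 1,
        dsmVar t = (αf t) ^ 2 * v / ((σf t) ^ 2 * ((αf t) ^ 2 * v + (σf t) ^ 2)) ∧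
        psmVar t = (σf t) ^ 2 / (v * ((αf t) ^ 2 * v + (σf t) ^ 2))) ∧
    Tendsto dsmVar (nhdsWithin 0 (Set.Ioi 0)) atTop ∧
    Tendsto psmVar (nhdsWithin 0 (Set.Ioi 0)) (nhds 0) ∧
    ∃ t₀ > (0 : ℝ), ∀ t ∈ Set.Ioo (0 : ℝ) t₀, psmVar t < dsmVar t :=
  psm_dsm_variance_near_zero_general μ y v hv αf σf hσpos hα1 hσ0
end
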